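/- Let n ≥ 2, let Ω ⊆ ℝⁿ be a domain, z ∈ ℝⁿ and ρ > 0. If y, w ∈ Ω \ closure(B(z, ρ)) lie in different connected components of Ω \ closure(B(z, ρ)), then |y − w| ≥ (1/8) · max{ dist(y, ℝⁿ \ Ω), dist(w, ℝⁿ \ Ω) }. -/
import Mathlib


open MeasureTheory Metric Set
open scoped ENNReal

noncomputable section

/-- Euclidean space `ℝⁿ`. -/
abbrev Eu (n : ℕ) : Type := EuclideanSpace ℝ (Fin n)

/-- A domain: a nonempty open connected subset. -/
def IsDomainEu {n : ℕ} (Ω : Set (Eu n)) : Prop := IsOpen Ω ∧ IsConnected Ω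

/-- The Hajłasz gradient class `𝒟^{s,ρ}_ball(u)` on `Ω`: nonnegative measurable `g` such that
`|u x - u y| ≤ |x-y|^s (g x + g y)` for all `x, y ∈ Ω` off a null set with
`|x - y| < ρ · dist(x, ∂Ω)`. -/
def DBall {n : ℕ} (Ω : Set (Eu n)) (s ρ : ℝ) (u : Eu n → ℝ) : Set (Eu n → ℝ) :=
  {g | Measurable g ∧ (∀ x, 0 ≤ g x) ∧
    ∃ N : Set (Eu n), N ⊆ Ω ∧ volume N = 0 ∧
      ∀ x ∈ Ω \ N, ∀ y ∈ Ω \ N,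
        edist x y < ENNReal.ofReal ρ * EMetric.infEdist x Ωᶜ →
        |u x - u y| ≤ dist x y ^ s * (g x + g y)}

/-- The full Hajłasz gradient class `𝒟^s(u)` on `U`. -/
def DFull {n : ℕ} (U : Set (Eu n)) (s : ℝ) (u : Eu n → ℝ) : Set (Eu n → ℝ) :=
  {g | Measurable g ∧ (∀ x, 0 ≤ g x) ∧
    ∃ N : Set (Eu n), N ⊆ U ∧ volume N = 0 ∧
      ∀ x ∈ U \ N, ∀ y ∈ U \ N, |u x - u y| ≤ dist x y ^ s * (g x + g y)}

/-- `inf_{g ∈ 𝒟^{s,ρ}_ball(u)} ‖g‖_{L^p(Ω)}`. -/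
def ballNormRho {n : ℕ} (Ω : Set (Eu n)) (s p ρ : ℝ) (u : Eu n → ℝ) : ℝ≥0∞ :=
  ⨅ g ∈ DBall Ω s ρ u, eLpNorm g (ENNReal.ofReal p) (volume.restrict Ω)

/-- The `Ṁ^{s,p}_ball(Ω)` seminorm (with `ρ = 1/2`). -/
def ballNorm {n : ℕ} (Ω : Set (Eu n)) (s p : ℝ) (u : Eu n → ℝ) : ℝ≥0∞ :=
  ballNormRho Ω s p (1/2) u

/-- The `Ṁ^{s,p}(U)` seminorm. -/
def fullNorm {n : ℕ} (U : Set (Eu n)) (s p : ℝ) (u : Eu n → ℝ) : ℝ≥0∞ :=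
  ⨅ g ∈ DFull U s u, eLpNorm g (ENNReal.ofReal p) (volume.restrict U)

/-- Membership in `Ṁ^{s,p}_ball(Ω)`. -/
def MemMball {n : ℕ} (Ω : Set (Eu n)) (s p : ℝ) (u : Eu n → ℝ) : Prop :=
  Measurable u ∧ ballNorm Ω s p u < ⊤

/-- Membership in `Ṁ^{s,p}(U)`. -/
def MemMfull {n : ℕ} (U : Set (Eu n)) (s p : ℝ) (u : Eu n → ℝ) : Prop :=
  Measurable u ∧ fullNorm U s p u < ⊤

/-- `Ω` supports a `(pn/(n-ps), p)_s`-Hajłasz–Sobolev–Poincaré imbedding. -/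
def SupportsHSP {n : ℕ} (Ω : Set (Eu n)) (s p : ℝ) : Prop :=
  ∃ C : ℝ, 0 < C ∧ ∀ u : Eu n → ℝ, MemMball Ω s p u →
    eLpNorm (fun x => u x - ⨍ y in Ω, u y)
        (ENNReal.ofReal (p * n / (n - p * s))) (volume.restrict Ω)
      ≤ ENNReal.ofReal C * ballNorm Ω s p u

/-- LLC(2) with constant `b`: points of `Ω \ B(z,r)` lie in the same connected component
of `Ω \ B(z, br)`. -/
def LLC2With {n : ℕ} (Ω : Set (Eu n)) (b : ℝ) : Prop :=
  ∀ (z : Eu n) (r : ℝ), 0 < r →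
    ∀ x ∈ Ω \ ball z r, ∀ y ∈ Ω \ ball z r,
      y ∈ connectedComponentIn (Ω \ ball z (b * r)) x

/-- The LLC(2) property. -/
def LLC2 {n : ℕ} (Ω : Set (Eu n)) : Prop :=
  ∃ b : ℝ, b ∈ Set.Ioo (0:ℝ) 1 ∧ LLC2With Ω b

/-- `Ω` is an `Ṁ^{s,p}_ball`-extension domain. -/
def IsMballExtensionDomain {n : ℕ} (Ω : Set (Eu n)) (s p : ℝ) : Prop :=
  ∃ C : ℝ, 0 < C ∧ ∀ u : Eu n → ℝ, MemMball Ω s p u →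
    ∃ v : Eu n → ℝ, MemMball (Set.univ) s p v ∧ (∀ x ∈ Ω, v x = u x) ∧
      ballNorm (Set.univ) s p v ≤ ENNReal.ofReal C * ballNorm Ω s p u

/-- `Ω` is a John domain: there are `x₀ ∈ Ω` and `C > 0` such that every `x ∈ Ω` is joined to
`x₀` by a curve parametrized by arclength (here: `1`-Lipschitz) with
`dist(γ t, Ωᶜ) ≥ C t`. -/
def IsJohnDomain {n : ℕ} (Ω : Set (Eu n)) : Prop :=
  ∃ x₀ ∈ Ω, ∃ C : ℝ, 0 < C ∧ ∀ x ∈ Ω, ∃ ℓ : ℝ, 0 ≤ ℓ ∧ ∃ γ : ℝ → Eu n,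
    LipschitzOnWith 1 γ (Set.Icc 0 ℓ) ∧ γ 0 = x ∧ γ ℓ = x₀ ∧
    ∀ t ∈ Set.Icc (0:ℝ) ℓ, γ t ∈ Ω ∧ C * t ≤ infDist (γ t) Ωᶜ

/-- Quasihyperbolic distance: infimum over arclength-parametrized (`1`-Lipschitz) curves in `Ω`
joining `x` to `y` of `∫ dist(γ t, Ωᶜ)⁻¹ dt`. -/
def qhDist {n : ℕ} (Ω : Set (Eu n)) (x y : Eu n) : ℝ :=
  sInf { k : ℝ | ∃ ℓ : ℝ, 0 ≤ ℓ ∧ ∃ γ : ℝ → Eu n,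
    LipschitzOnWith 1 γ (Set.Icc 0 ℓ) ∧ γ 0 = x ∧ γ ℓ = y ∧
    (∀ t ∈ Set.Icc (0:ℝ) ℓ, γ t ∈ Ω) ∧
    k = ∫ t in (0:ℝ)..ℓ, (infDist (γ t) Ωᶜ)⁻¹ }

/-- Weak carrot domain (quasihyperbolic boundary condition). -/
def IsWeakCarrot {n : ℕ} (Ω : Set (Eu n)) : Prop :=
  ∃ x₀ ∈ Ω, ∃ C : ℝ, 1 ≤ C ∧ ∀ x ∈ Ω,
    qhDist Ω x x₀ ≤ C * Real.log (C / infDist x Ωᶜ)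

/-- The Luxemburg norm `‖u‖_{φ_s(L)(Ω)}` with `φ_s(t) = exp(t^{n/(n-s)}) - 1`
(value `⊤` when no admissible `t` exists). -/
def phiLux {n : ℕ} (Ω : Set (Eu n)) (s : ℝ) (u : Eu n → ℝ) : ℝ≥0∞ :=
  sInf (ENNReal.ofReal '' { t : ℝ | 0 < t ∧
    (∫⁻ x in Ω, ENNReal.ofReal
        (Real.exp ((|u x| / t) ^ ((n : ℝ) / ((n : ℝ) - s))) - 1)) ≤ 1 })

/-- `Ω` supports an `s`-Hajłasz–Trudinger imbedding. -/
def SupportsHT {n : ℕ} (Ω : Set (Eu n)) (s : ℝ) : Prop :=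
  ∃ C : ℝ, 0 < C ∧ ∀ u : Eu n → ℝ, MemMball Ω s ((n : ℝ) / s) u →
    phiLux Ω s (fun x => u x - ⨍ y in Ω, u y)
      ≤ ENNReal.ofReal C * ballNorm Ω s ((n : ℝ) / s) u

/-- The separation property with respect to `x₀` and `C`. -/
def SeparationProperty {n : ℕ} (Ω : Set (Eu n)) (x₀ : Eu n) (C : ℝ) : Prop :=
  ∀ x ∈ Ω, ∃ γ : ℝ → Eu n, ContinuousOn γ (Set.Icc 0 1) ∧
    (∀ t ∈ Set.Icc (0:ℝ) 1, γ t ∈ Ω) ∧ γ 0 = x ∧ γ 1 = x₀ ∧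
    ∀ t ∈ Set.Ioc (0:ℝ) 1,
      γ '' Set.Icc 0 t ⊆ ball (γ t) (C * infDist (γ t) Ωᶜ) ∨
      ∀ y ∈ γ '' Set.Icc 0 t \ ball (γ t) (C * infDist (γ t) Ωᶜ),
        connectedComponentIn (Ω \ sphere (γ t) (C * infDist (γ t) Ωᶜ)) y ≠
          connectedComponentIn (Ω \ sphere (γ t) (C * infDist (γ t) Ωᶜ)) x₀

/-- The slice property with constant `C`. Lengths of curve portions are measured via the
Lebesgue measure of parameter preimages of arclength (`1`-Lipschitz) parametrizations. -/
def SliceProperty {n : ℕ} (Ω : Set (Eu n)) (C : ℝ) : Prop :=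
  ∀ x ∈ Ω, ∀ y ∈ Ω, ∃ (j : ℕ) (S : ℕ → Set (Eu n)) (L : ℝ) (γ : ℝ → Eu n),
    0 ≤ L ∧ LipschitzOnWith 1 γ (Set.Icc 0 L) ∧ γ 0 = x ∧ γ L = y ∧
    (∀ t ∈ Set.Icc (0:ℝ) L, γ t ∈ Ω) ∧
    (∀ i ≤ j, IsOpen (S i) ∧ S i ⊆ Ω) ∧
    (∀ i ≤ j, ∀ k ≤ j, i ≠ k → Disjoint (S i) (S k)) ∧
    x ∈ S 0 ∧ y ∈ S j ∧
    (∀ i, 0 < i → i < j →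
      connectedComponentIn (Ω \ closure (S i)) x ≠
        connectedComponentIn (Ω \ closure (S i)) y) ∧
    (∀ (LF : ℝ) (F : ℝ → Eu n), 0 ≤ LF → LipschitzOnWith 1 F (Set.Icc 0 LF) →
      F '' Set.Icc 0 LF ⊆ Ω → (∃ t ∈ Set.Icc (0:ℝ) LF, F t = x) →
      (∃ t ∈ Set.Icc (0:ℝ) LF, F t = y) →
      ∀ i, 0 < i → i < j →
        Metric.diam (S i) ≤ C * (volume {t : ℝ | t ∈ Set.Icc (0:ℝ) LF ∧ F t ∈ S i}).toReal) ∧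
    (∀ t ∈ Set.Icc (0:ℝ) L,
      ball (γ t) (C⁻¹ * infDist (γ t) Ωᶜ) ⊆ ⋃ i ∈ Finset.range (j + 1), S i) ∧
    (∀ i ≤ j, ∀ z ∈ γ '' Set.Icc (0:ℝ) L ∩ S i, Metric.diam (S i) ≤ C * infDist z Ωᶜ) ∧
    (∃ xi : ℕ → Eu n, xi 0 = x ∧ xi j = y ∧
      ∀ i ≤ j, xi i ∈ S i ∧ ball (xi i) (C⁻¹ * infDist (xi i) Ωᶜ) ⊆ S i)

/-- `v : Ω → ℝⁿ` is a distributional gradient of `u` on `U`. -/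
def HasDistribGradOn {n : ℕ} (U : Set (Eu n)) (u : Eu n → ℝ) (v : Eu n → Eu n) : Prop :=
  ∀ φ : Eu n → ℝ, ContDiff ℝ (⊤ : ℕ∞) φ → HasCompactSupport φ → tsupport φ ⊆ U →
    ∀ i : Fin n,
      ∫ x in U, u x * fderiv ℝ φ x (EuclideanSpace.single i 1) = - ∫ x in U, v x i * φ x

/-- `u ∈ Ẇ^{1,p}(U)` with distributional gradient `v ∈ L^p(U;ℝⁿ)`. -/
def MemW1p {n : ℕ} (U : Set (Eu n)) (p : ℝ) (u : Eu n → ℝ) (v : Eu n → Eu n) : Prop :=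
  LocallyIntegrableOn u U volume ∧ AEMeasurable v (volume.restrict U) ∧
    eLpNorm v (ENNReal.ofReal p) (volume.restrict U) < ⊤ ∧ HasDistribGradOn U u v

/-- `Ω` is a `Ẇ^{1,p}`-extension domain. -/
def IsW1pExtensionDomain {n : ℕ} (Ω : Set (Eu n)) (p : ℝ) : Prop :=
  ∃ C : ℝ, 0 < C ∧ ∀ u v, MemW1p Ω p u v →
    ∃ u' v', MemW1p (Set.univ) p u' v' ∧ (∀ᵐ x ∂(volume.restrict Ω), u' x = u x) ∧
      eLpNorm v' (ENNReal.ofReal p) volume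
        ≤ ENNReal.ofReal C * eLpNorm v (ENNReal.ofReal p) (volume.restrict Ω)

/-- The (uncentered over radii, centered) Hardy–Littlewood maximal function, `ℝ≥0∞`-valued. -/
def HLMax {n : ℕ} (g : Eu n → ℝ) (y : Eu n) : ℝ≥0∞ :=
  ⨆ (t : ℝ) (_ : 0 < t), (volume (ball y t))⁻¹ * ∫⁻ z in ball y t, ENNReal.ofReal |g z|

open scoped RealInnerProductSpace

/-- existence of a unit vector orthogonal to `u`, for `n ≥ 2`. -/
lemma exists_unit_orth {n : ℕ} (hn : 2 ≤ n) (u : Eu n) :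
    ∃ e : Eu n, ‖e‖ = 1 ∧ ⟪u, e⟫ = 0 := by
  have hpos : 0 < Module.finrank ℝ ((ℝ ∙ u)ᗮ : Submodule ℝ (Eu n)) := by
    have h1 := Submodule.finrank_add_finrank_orthogonal (𝕜 := ℝ) (ℝ ∙ u)
    have h2 : Module.finrank ℝ (Eu n) = n := by
      simp [finrank_euclideanSpace]
    have h3 : Module.finrank ℝ (ℝ ∙ u : Submodule ℝ (Eu n)) ≤ 1 := by
      rcases eq_or_ne u 0 with rfl | hu
      · rw [Submodule.span_zero_singleton]; simp
      · rw [finrank_span_singleton hu]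
    omega
  have : Nontrivial ((ℝ ∙ u)ᗮ : Submodule ℝ (Eu n)) := Module.finrank_pos_iff.mp hpos
  obtain ⟨⟨e', he'mem⟩, hne⟩ := exists_ne (0 : ((ℝ ∙ u)ᗮ : Submodule ℝ (Eu n)))
  have he0 : e' ≠ 0 := by
    intro h; exact hne (Subtype.ext h)
  refine ⟨‖e'‖⁻¹ • e', ?_, ?_⟩
  · rw [norm_smul, norm_inv, norm_norm, inv_mul_cancel₀ (norm_ne_zero_iff.mpr he0)]
  · rw [real_inner_smul_right]
    have := (Submodule.mem_orthogonal _ _).mp he'mem u (Submodule.mem_span_singleton_self u)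
    rw [this, mul_zero]

lemma joinedIn_connectedComponentIn_eq {X : Type*} [TopologicalSpace X] {S : Set X} {a b : X}
    (h : JoinedIn S a b) : connectedComponentIn S a = connectedComponentIn S b := by
  obtain ⟨γ, hγ⟩ := h
  have hconn : IsPreconnected (range γ) := isPreconnected_range γ.continuous
  have hsub : range γ ⊆ S := range_subset_iff.mpr hγ
  have ha : a ∈ range γ := ⟨0, γ.source⟩
  have hb : b ∈ range γ := ⟨1, γ.target⟩
  exact connectedComponentIn_eq (hconn.subset_connectedComponentIn ha hsub hb)

set_option maxHeartbeats 2000000 in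
lemma key_joined {n : ℕ} (hn : 2 ≤ n) (Ω : Set (Eu n))
    (z : Eu n) (ρ : ℝ) (hρ : 0 < ρ) (y w : Eu n)
    (hy : y ∈ Ω \ closedBall z ρ) (hw : w ∈ Ω \ closedBall z ρ)
    (ht : dist y w < (1/8) * infDist y Ωᶜ) :
    JoinedIn (Ω \ closedBall z ρ) y w := by
  set S := Ω \ closedBall z ρ with hSdef
  rcases eq_or_ne y w with rfl | hne
  · exact JoinedIn.refl hy
  set t := dist y w with htdef
  have ht0 : 0 < t := dist_pos.mpr hne
  set d := infDist y Ωᶜ with hddef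
  have hd0 : 0 < d := by nlinarith
  have hball : ∀ p : Eu n, dist y p < d → p ∈ Ω := by
    intro p hp
    by_contra hpΩ
    have h1 : infDist y Ωᶜ ≤ dist y p := infDist_le_dist_of_mem hpΩ
    rw [← hddef] at h1; linarith
  set u : Eu n := t⁻¹ • (w - y) with hudef
  have hwy : ‖w - y‖ = t := by rw [← dist_eq_norm, dist_comm]
  have hu1 : ‖u‖ = 1 := by
    rw [hudef, norm_smul, norm_inv, Real.norm_eq_abs, abs_of_pos ht0, hwy,
      inv_mul_cancel₀ ht0.ne']
  have htu : t • u = w - y := by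
    rw [hudef, smul_smul, mul_inv_cancel₀ ht0.ne', one_smul]
  set b : ℝ := ⟪y - z, u⟫ with hbdef
  set v : Eu n := (y - z) - b • u with hvdef
  set c : ℝ := ‖v‖ with hcdef
  have hc0 : 0 ≤ c := norm_nonneg _
  have huu : ⟪u, u⟫ = 1 := by
    rw [real_inner_self_eq_norm_sq, hu1]; norm_num
  have huv : ⟪u, v⟫ = 0 := by
    rw [hvdef, inner_sub_right, real_inner_smul_right, huu, mul_one,
      real_inner_comm, ← hbdef, sub_self]
  have hvu : ⟪v, u⟫ = 0 := by rw [real_inner_comm]; exact huv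
  have hyz : y - z = b • u + v := by rw [hvdef]; abel
  have hwz : w - z = (b + t) • u + v := by
    have : w - z = (w - y) + (y - z) := by abel
    rw [this, ← htu, hyz, add_smul]; abel
  obtain ⟨e, he1, hue, hve⟩ : ∃ e : Eu n, ‖e‖ = 1 ∧ ⟪u, e⟫ = 0 ∧ ⟪v, e⟫ = c := by
    rcases eq_or_ne v 0 with hv0 | hv0
    · obtain ⟨e, he1, hue⟩ := exists_unit_orth hn u
      exact ⟨e, he1, hue, by rw [hv0, inner_zero_left, hcdef, hv0, norm_zero]⟩
    · have hcpos : 0 < c := by rw [hcdef]; exact norm_pos_iff.mpr hv0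
      refine ⟨c⁻¹ • v, ?_, ?_, ?_⟩
      · rw [norm_smul, norm_inv, Real.norm_eq_abs, abs_of_pos hcpos, ← hcdef,
          inv_mul_cancel₀ hcpos.ne']
      · rw [real_inner_smul_right, huv, mul_zero]
      · rw [real_inner_smul_right, real_inner_self_eq_norm_sq, ← hcdef]
        field_simp
  have hee : ⟪e, e⟫ = 1 := by rw [real_inner_self_eq_norm_sq, he1]; norm_num
  have hb2c2 : b ^ 2 + c ^ 2 = ‖y - z‖ ^ 2 := by
    rw [hyz, norm_add_sq_real, real_inner_smul_left, huv, norm_smul,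
      Real.norm_eq_abs, hu1]
    rw [hcdef]; ring_nf; rw [sq_abs]; ring
  have hw2 : (b + t) ^ 2 + c ^ 2 = ‖w - z‖ ^ 2 := by
    rw [hwz, norm_add_sq_real, real_inner_smul_left, huv, norm_smul,
      Real.norm_eq_abs, hu1]
    rw [hcdef]; ring_nf; rw [sq_abs]; ring
  have hcv : ‖v‖ = c := hcdef.symm
  clear hudef hbdef hvdef hcdef htdef hddef huu hee hvu
  clear_value u b v c t d
  have hyρ : ρ < ‖y - z‖ := by
    have := hy.2; rw [mem_closedBall, dist_eq_norm, not_le] at this; exact this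
  have hwρ : ρ < ‖w - z‖ := by
    have := hw.2; rw [mem_closedBall, dist_eq_norm, not_le] at this; exact this
  have hyz0 : 0 ≤ ‖y - z‖ := norm_nonneg _
  have hwz0 : 0 ≤ ‖w - z‖ := norm_nonneg _
  have hA : ρ ^ 2 < b ^ 2 + c ^ 2 := by rw [hb2c2]; nlinarith
  have hB : ρ ^ 2 < (b + t) ^ 2 + c ^ 2 := by rw [hw2]; nlinarith
  -- key membership: points of the form  y + s • u + h • e
  have hmem : ∀ s h : ℝ, 0 ≤ s → s ≤ t → 0 ≤ h → h ≤ 2 * t →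
      (ρ ^ 2 < (b + s) ^ 2 + (c + h) ^ 2) → y + s • u + h • e ∈ S := by
    intro s h hs0 hst hh0 hh2 hρlt
    set p : Eu n := y + s • u + h • e with hpdef
    have hpz : p - z = (b + s) • u + (v + h • e) := by
      have : p - z = (y - z) + s • u + h • e := by rw [hpdef]; abel
      rw [this, hyz, add_smul]; abel
    have hnorm : ‖p - z‖ ^ 2 = (b + s) ^ 2 + (c + h) ^ 2 := by
      rw [hpz, norm_add_sq_real]
      have h1 : ⟪(b + s) • u, v + h • e⟫ = 0 := by
        rw [real_inner_smul_left, inner_add_right, real_inner_smul_right, huv, hue]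
        ring
      have h2 : ‖(b + s) • u‖ ^ 2 = (b + s) ^ 2 := by
        rw [norm_smul, Real.norm_eq_abs, hu1, mul_one, sq_abs]
      have h3 : ‖v + h • e‖ ^ 2 = (c + h) ^ 2 := by
        rw [norm_add_sq_real, real_inner_smul_right, hve, norm_smul,
          Real.norm_eq_abs, he1, mul_one, sq_abs, hcv]
        ring
      rw [h1, h2, h3]; ring
    constructor
    · apply hball
      have hd1 : dist y p = ‖s • u + h • e‖ := by
        rw [hpdef, add_assoc, dist_self_add_right]
      rw [hd1]
      calc ‖s • u + h • e‖ ≤ ‖s • u‖ + ‖h • e‖ := norm_add_le _ _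
        _ = s + h := by
            rw [norm_smul, norm_smul, Real.norm_eq_abs, Real.norm_eq_abs, hu1, he1,
              abs_of_nonneg hs0, abs_of_nonneg hh0]; ring
        _ < d := by linarith
    · rw [mem_closedBall, not_le, dist_eq_norm]
      have h2' : ρ ^ 2 < ‖p - z‖ ^ 2 := by rw [hnorm]; exact hρlt
      exact lt_of_pow_lt_pow_left₀ 2 (norm_nonneg _) h2'
  clear hSdef
  clear_value S
  -- the three segment endpoints
  have hyS : y ∈ S := by
    have := hmem 0 0 le_rfl ht0.le le_rfl (by linarith) (by simpa using hA)
    simpa using this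
  have hy' : y + (2 * t) • e ∈ S := by
    have := hmem 0 (2 * t) le_rfl ht0.le (by linarith) le_rfl (by nlinarith)
    simpa using this
  have hw' : w + (2 * t) • e ∈ S := by
    have h1 := hmem t (2 * t) ht0.le le_rfl (by linarith) le_rfl (by nlinarith)
    have h2 : y + t • u + (2 * t) • e = w + (2 * t) • e := by rw [htu]; abel
    rwa [h2] at h1
  -- segment subsets
  have hseg1 : segment ℝ y (y + (2 * t) • e) ⊆ S := by
    rw [segment_eq_image']
    rintro p ⟨θ, hθ, rfl⟩
    show y + θ • (y + (2 * t) • e - y) ∈ S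
    have : y + θ • (y + (2 * t) • e - y) = y + (0 : ℝ) • u + (θ * (2 * t)) • e := by
      rw [add_sub_cancel_left, smul_smul]; simp
    rw [this]
    have hθt0 : 0 ≤ θ * (2 * t) := mul_nonneg hθ.1 (by linarith)
    have hθt2 : θ * (2 * t) ≤ 2 * t := by
      nlinarith [mul_nonneg (sub_nonneg.mpr hθ.2) (show (0:ℝ) ≤ 2 * t by linarith)]
    apply hmem 0 (θ * (2 * t)) le_rfl ht0.le hθt0 hθt2
    nlinarith [hA, mul_nonneg hc0 hθt0, sq_nonneg (θ * (2 * t))]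
  have hseg3 : segment ℝ (w + (2 * t) • e) w ⊆ S := by
    rw [segment_symm, segment_eq_image']
    rintro p ⟨θ, hθ, rfl⟩
    show w + θ • (w + (2 * t) • e - w) ∈ S
    have hq : w + θ • (w + (2 * t) • e - w) = y + t • u + (θ * (2 * t)) • e := by
      rw [add_sub_cancel_left, smul_smul, htu]; abel
    rw [hq]
    have hθt0 : 0 ≤ θ * (2 * t) := mul_nonneg hθ.1 (by linarith)
    have hθt2 : θ * (2 * t) ≤ 2 * t := by
      nlinarith [mul_nonneg (sub_nonneg.mpr hθ.2) (show (0:ℝ) ≤ 2 * t by linarith)]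
    apply hmem t (θ * (2 * t)) ht0.le le_rfl hθt0 hθt2
    nlinarith [hB, mul_nonneg hc0 hθt0, sq_nonneg (θ * (2 * t))]
  have hseg2 : segment ℝ (y + (2 * t) • e) (w + (2 * t) • e) ⊆ S := by
    rw [segment_eq_image']
    rintro p ⟨θ, hθ, rfl⟩
    show y + (2 * t) • e + θ • (w + (2 * t) • e - (y + (2 * t) • e)) ∈ S
    have hq : y + (2 * t) • e + θ • (w + (2 * t) • e - (y + (2 * t) • e))
        = y + (θ * t) • u + (2 * t) • e := by
      have h1 : w + (2 * t) • e - (y + (2 * t) • e) = w - y := by abel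
      rw [h1, ← htu, smul_smul]; abel
    rw [hq]
    have hθt0 : 0 ≤ θ * t := mul_nonneg hθ.1 ht0.le
    have hθt1 : θ * t ≤ t := by
      nlinarith [mul_nonneg (sub_nonneg.mpr hθ.2) ht0.le]
    apply hmem (θ * t) (2 * t) hθt0 hθt1 (by linarith) le_rfl
    -- the main geometric inequality
    set s := θ * t with hsdef
    have hs0 : 0 ≤ s := hθt0
    have hst : s ≤ t := hθt1
    rcases le_or_gt 0 b with hb | hb
    · nlinarith
    rcases le_or_gt (b + t) 0 with hbt | hbt
    · nlinarith [sq_nonneg (c + 2 * t), mul_nonneg (sub_nonneg.mpr hst) (neg_nonneg.mpr (by linarith : 2 * b + s + t ≤ 0))]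
    · -- -t < b < 0
      have hbb : b ^ 2 < t ^ 2 := by nlinarith
      rcases le_or_gt ρ t with hρt | hρt
      · nlinarith [sq_nonneg (b + s)]
      · have hc2 : (ρ - t) ^ 2 < c ^ 2 := by nlinarith
        have : ρ - t < c := by nlinarith
        nlinarith [sq_nonneg (b + s)]
  -- glue
  have j1 : JoinedIn S y (y + (2 * t) • e) :=
    (((convex_segment y _).isPathConnected ⟨y, left_mem_segment ℝ _ _⟩).joinedIn _
      (left_mem_segment ℝ _ _) _ (right_mem_segment ℝ _ _)).mono hseg1
  have j2 : JoinedIn S (y + (2 * t) • e) (w + (2 * t) • e) :=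
    (((convex_segment _ _).isPathConnected ⟨_, left_mem_segment ℝ _ _⟩).joinedIn _
      (left_mem_segment ℝ _ _) _ (right_mem_segment ℝ _ _)).mono hseg2
  have j3 : JoinedIn S (w + (2 * t) • e) w :=
    (((convex_segment _ _).isPathConnected ⟨_, left_mem_segment ℝ _ _⟩).joinedIn _
      (left_mem_segment ℝ _ _) _ (right_mem_segment ℝ _ _)).mono hseg3
  exact j1.trans (j2.trans j3)

/-- If `y, w` lie in different connected components of
`Ω \ closure(B(z, ρ))`, then `|y - w| ≥ max(dist(y, Ωᶜ), dist(w, Ωᶜ)) / 8`. -/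
theorem stmt15 {n : ℕ} (hn : 2 ≤ n) (Ω : Set (Eu n)) (hΩ : IsDomainEu Ω)
    (z : Eu n) (ρ : ℝ) (hρ : 0 < ρ) (y w : Eu n)
    (hy : y ∈ Ω \ closure (ball z ρ)) (hw : w ∈ Ω \ closure (ball z ρ))
    (hcc : connectedComponentIn (Ω \ closure (ball z ρ)) y ≠
      connectedComponentIn (Ω \ closure (ball z ρ)) w) :
    (1 / 8) * max (infDist y Ωᶜ) (infDist w Ωᶜ) ≤ dist y w := by
  have hcl : closure (ball z ρ) = closedBall z ρ := closure_ball z hρ.ne'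
  rw [hcl] at hy hw hcc
  by_contra hcon
  push_neg at hcon
  rcases le_total (infDist y Ωᶜ) (infDist w Ωᶜ) with hle | hle
  · rw [max_eq_right hle] at hcon
    have hJ := key_joined hn Ω z ρ hρ w y hw hy (by rw [dist_comm]; exact hcon)
    exact hcc (joinedIn_connectedComponentIn_eq hJ).symm
  · rw [max_eq_left hle] at hcon
    have hJ := key_joined hn Ω z ρ hρ y w hy hw hcon
    exact hcc (joinedIn_connectedComponentIn_eq hJ)
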